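/- Let k be a positive integer, c, s ∈ ℂ \ {0} with c ∉ ℝ, and let x : ℂ → ℝ⁴ be defined by x(z) = Re[ s·( z^{2k+1}/(2k+1) + cz, −i(z^{2k+1}/(2k+1) − cz), (1−c)/(k+1)·z^{k+1}, (1+c)/(k+1)·z^{k+1} ) ]. If x(z) = x(w) with z ≠ w, then z^{k+1} = w^{k+1} and f(z) = 0, where f(z) = (s/(2k+1)) z^{2k+1} + s̄ c̄ z̄. -/
import Mathlib


open Complex

/-- The Enneper-type surface `x : ℂ → ℝ⁴` with Weierstrass data
`φ = z^k`, `ψ = c/z^k`, `dh = s z^k dz`. -/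
noncomputable def enneperX (k : ℕ) (c s : ℂ) (z : ℂ) : ℝ × ℝ × ℝ × ℝ :=
  ((s * (z ^ (2 * k + 1) / (2 * k + 1) + c * z)).re,
   (s * (-I * (z ^ (2 * k + 1) / (2 * k + 1) - c * z))).re,
   (s * ((1 - c) / (k + 1) * z ^ (k + 1))).re,
   (s * ((1 + c) / (k + 1) * z ^ (k + 1))).re)

/-- For `k ≥ 1`, `c, s ≠ 0`, `c ∉ ℝ`: any self-intersection `x(z) = x(w)`, `z ≠ w`,
of the Enneper-type surface satisfies `z^{k+1} = w^{k+1}` and `f(z) = 0`, where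
`f(z) = (s/(2k+1)) z^{2k+1} + s̄ c̄ z̄`. -/
theorem stmt10 (k : ℕ) (hk : 0 < k) (c s : ℂ) (hc0 : c ≠ 0) (hs : s ≠ 0)
    (hc : ∀ r : ℝ, c ≠ (r : ℂ)) (z w : ℂ)
    (hxw : enneperX k c s z = enneperX k c s w) (hzw : z ≠ w) :
    z ^ (k + 1) = w ^ (k + 1) ∧
      s / (2 * k + 1) * z ^ (2 * k + 1) +
        (starRingEnd ℂ) s * (starRingEnd ℂ) c * (starRingEnd ℂ) z = 0 := by
  simp only [enneperX, Prod.mk.injEq] at hxw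
  obtain ⟨e1, e2, e3, e4⟩ := hxw
  have hcim : c.im ≠ 0 := by
    intro h
    exact hc c.re (by apply Complex.ext <;> simp [h])
  have hkR : ((k : ℝ) + 1) ≠ 0 := by positivity
  have hcast : ((k : ℂ) + 1) = (((k : ℝ) + 1 : ℝ) : ℂ) := by push_cast; ring
  set v : ℂ := s * (z ^ (k + 1) - w ^ (k + 1)) with hv
  have h3 : ((1 - c) * v).re = 0 := by
    have h : (((1 - c) * v) / ((k : ℂ) + 1)).re = 0 := by
      have heq : ((1 - c) * v) / ((k : ℂ) + 1)
          = s * ((1 - c) / ((k : ℂ) + 1) * z ^ (k + 1))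
            - s * ((1 - c) / ((k : ℂ) + 1) * w ^ (k + 1)) := by
        rw [hv]; ring
      rw [heq, Complex.sub_re, e3, sub_self]
    rw [hcast, Complex.div_ofReal_re] at h
    exact (div_eq_zero_iff.mp h).resolve_right hkR
  have h4 : ((1 + c) * v).re = 0 := by
    have h : (((1 + c) * v) / ((k : ℂ) + 1)).re = 0 := by
      have heq : ((1 + c) * v) / ((k : ℂ) + 1)
          = s * ((1 + c) / ((k : ℂ) + 1) * z ^ (k + 1))
            - s * ((1 + c) / ((k : ℂ) + 1) * w ^ (k + 1)) := by
        rw [hv]; ring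
      rw [heq, Complex.sub_re, e4, sub_self]
    rw [hcast, Complex.div_ofReal_re] at h
    exact (div_eq_zero_iff.mp h).resolve_right hkR
  have ha : ((1 - c) * v).re = v.re - (c.re * v.re - c.im * v.im) := by
    simp [sub_mul, Complex.sub_re, Complex.mul_re]
  have hb : ((1 + c) * v).re = v.re + (c.re * v.re - c.im * v.im) := by
    simp [add_mul, Complex.add_re, Complex.mul_re]
  have hvre : v.re = 0 := by rw [ha] at h3; rw [hb] at h4; linarith
  have hvim : v.im = 0 := by
    rw [ha, hvre] at h3
    have : c.im * v.im = 0 := by linarith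
    exact (mul_eq_zero.mp this).resolve_left hcim
  have hv0 : v = 0 := by apply Complex.ext <;> simp [hvre, hvim]
  have hzw1 : z ^ (k + 1) = w ^ (k + 1) := by
    have := (mul_eq_zero.mp (hv ▸ hv0)).resolve_left hs
    exact sub_eq_zero.mp this
  refine ⟨hzw1, ?_⟩
  -- now the second part
  have hz0 : z ≠ 0 := by
    intro h
    apply hzw
    rw [h] at hzw1 ⊢
    have h0 : w ^ (k + 1) = 0 := by
      rw [← hzw1, zero_pow (Nat.succ_ne_zero k)]
    exact ((pow_eq_zero_iff (Nat.succ_ne_zero k)).mp h0).symm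
  set ζ : ℂ := w / z with hζdef
  have hw : w = ζ * z := by rw [hζdef, div_mul_cancel₀ w hz0]
  have hζ1 : ζ ^ (k + 1) = 1 := by
    rw [hζdef, div_pow, ← hzw1, div_self (pow_ne_zero _ hz0)]
  have hζne : ζ ≠ 1 := by
    intro h
    apply hzw
    rw [hw, h, one_mul]
  have hζinv : ζ⁻¹ = ζ ^ k := by
    apply inv_eq_of_mul_eq_one_right
    rw [← pow_succ']
    exact hζ1
  have hns : Complex.normSq ζ = 1 := by
    have hp : Complex.normSq ζ ^ (k + 1) = 1 := by
      rw [← map_pow, hζ1, map_one]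
    have hx := Complex.normSq_nonneg ζ
    rcases lt_trichotomy (Complex.normSq ζ) 1 with h | h | h
    · have := pow_lt_one₀ hx h (by omega : k + 1 ≠ 0); linarith
    · exact h
    · have := one_lt_pow₀ h (by omega : k + 1 ≠ 0); linarith
  have hconj : (starRingEnd ℂ) ζ = ζ ^ k := by
    rw [← hζinv, Complex.inv_def, hns]
    simp
  have hf : s * (z ^ (2 * k + 1) / (2 * (k : ℂ) + 1))
        + (starRingEnd ℂ) s * (starRingEnd ℂ) c * (starRingEnd ℂ) z
      = s * (w ^ (2 * k + 1) / (2 * (k : ℂ) + 1))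
        + (starRingEnd ℂ) s * (starRingEnd ℂ) c * (starRingEnd ℂ) w := by
    simp only [Complex.ext_iff, mul_add, mul_sub, Complex.add_re, Complex.add_im,
      Complex.sub_re, Complex.sub_im, Complex.mul_re, Complex.mul_im,
      Complex.conj_re, Complex.conj_im, Complex.I_re, Complex.I_im,
      Complex.neg_re, Complex.neg_im] at e1 e2 ⊢
    constructor
    · linear_combination e1
    · linear_combination e2
  have hw2 : w ^ (2 * k + 1) = ζ ^ k * z ^ (2 * k + 1) := by
    rw [hw, mul_pow]
    congr 1
    rw [show 2 * k + 1 = (k + 1) + k by ring, pow_add, hζ1, one_mul]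
  have hwconj : (starRingEnd ℂ) w = ζ ^ k * (starRingEnd ℂ) z := by
    rw [hw, map_mul, hconj]
  rw [hw2, hwconj] at hf
  have hF : (1 - ζ ^ k) * (s * (z ^ (2 * k + 1) / (2 * (k : ℂ) + 1))
      + (starRingEnd ℂ) s * (starRingEnd ℂ) c * (starRingEnd ℂ) z) = 0 := by
    linear_combination hf
  have hζk : (1 : ℂ) - ζ ^ k ≠ 0 := by
    intro h
    apply hζne
    have h1 : ζ ^ k = 1 := by linear_combination -h
    rw [← hζinv] at h1
    exact inv_eq_one.mp h1
  have hF0 := (mul_eq_zero.mp hF).resolve_left hζk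
  linear_combination hF0
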